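/- arXiv:1706.02483 — 4 statements merged into one kernel-verified Lean document; each statement's English description precedes it below -/
import Mathlib

section
/- Let N be a nilpotent normal subgroup of the finite group G and let u be a torsion element of V(ℤG,N). Then Σ_{n^N} [C_G(n) : C_N(n)]·ε_n(u) = [G:N], where the sum runs over a set of representatives n of the conjugacy classes of N, C_G(n) is the centralizer of n in G, and C_N(n) = C_G(n) ∩ N. -/
open Finset

open Classical in
/-- Partial augmentation `ε_g(u)`: sum of the coefficients of `u` over the conjugacy
class of `g` in `G`. -/
noncomputable def partialAug {G : Type*} [Group G] [Fintype G]
    (u : MonoidAlgebra ℤ G) (g : G) : ℤ :=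
  ∑ x ∈ Finset.univ.filter (fun x => IsConj g x), u.coeff x

/-- The augmentation (sum of coefficients) of `u` equals 1. -/
def AugOne {G : Type*} [Group G] [Fintype G] (u : MonoidAlgebra ℤ G) : Prop :=
  ∑ g : G, u.coeff g = 1

/-- `u` is mapped to `1` by the ring homomorphism `ℤG → ℤ(G/N)` induced by `G → G/N`. -/
def MapsToOneMod {G : Type*} [Group G] (N : Subgroup G) [N.Normal]
    (u : MonoidAlgebra ℤ G) : Prop :=
  MonoidAlgebra.mapDomainRingHom ℤ (QuotientGroup.mk' N) u = 1


/-!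
Collecting the left-hand side by group elements, the coefficient `u_y` is weighted by
`∑ [C_G(n) : C_N(n)]` over the representatives `n ∈ R` that are `G`-conjugate to `y`. Off `N`
this sum is empty. For `y ∈ N` the class `y^G` is the disjoint union of the classes `n^N`, and
`|y^G| · [C_G(n) : C_N(n)] = [G : C_N(n)] = |n^N| · [G : N]`, so the weight is `[G : N]`.
Finally, the coefficients of `u` on `N` sum to `1`, since `u` maps to `1` in `ℤ(G/N)`.
-/

namespace Subgroup

variable {G : Type*} [Group G]

theorem relIndex_mul_index_comm (H K : Subgroup G) :
    H.relIndex K * K.index = K.relIndex H * H.index := by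
  rw [← inf_relIndex_right H K, relIndex_mul_index inf_le_right,
    ← inf_relIndex_right K H, relIndex_mul_index inf_le_right, inf_comm]

variable [Fintype G]

open Classical in
noncomputable def conjClass (N : Subgroup G) (n : G) : Finset G :=
  {y | ∃ c ∈ N, c * n * c⁻¹ = y}

theorem mem_conjClass {N : Subgroup G} {n y : G} :
    y ∈ N.conjClass n ↔ ∃ c ∈ N, c * n * c⁻¹ = y := by
  simp [conjClass]

open MulAction in
theorem card_conjClass (N : Subgroup G) (n : G) :
    #(N.conjClass n) = (centralizer {n}).relIndex N := by
  -- orbit–stabilizer for `N` acting by conjugation, as a subgroup of `ConjAct G`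
  set K := N.map (ConjAct.toConjAct : G ≃* ConjAct G).toMonoidHom
  have horbit : orbit K n = N.conjClass n := by
    ext y
    simp only [mem_orbit_iff, Subtype.exists, K, mem_map, mem_coe, mem_conjClass]
    constructor
    · rintro ⟨_, ⟨c, hc, rfl⟩, rfl⟩
      exact ⟨c, hc, ConjAct.toConjAct_smul c n⟩
    · rintro ⟨c, hc, rfl⟩
      exact ⟨_, ⟨c, hc, rfl⟩, ConjAct.toConjAct_smul c n⟩
  rw [← Set.ncard_coe_finset, ← horbit, ← index_stabilizer, centralizer_eq_comap_stabilizer]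
  exact (relIndex_comap (H := stabilizer (ConjAct G) n) _ N).symm

end Subgroup

open Subgroup

open Classical in
theorem MonoidAlgebra.coeff_mapDomain_eq_sum {R M M' : Type*} [Semiring R] [Fintype M]
    (f : M → M') (x : MonoidAlgebra R M) (b : M') :
    (MonoidAlgebra.mapDomain f x).coeff b = ∑ a with f a = b, x.coeff a := by
  simp only [MonoidAlgebra.mapDomain, MonoidAlgebra.coeff_ofCoeff, Finsupp.mapDomain,
    Finsupp.sum, Finsupp.finsetSum_apply, Finsupp.single_apply]
  rw [sum_filter]
  exact sum_subset (subset_univ _) fun a _ ha => by simp [Finsupp.notMem_support_iff.mp ha]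

open Classical in
theorem MapsToOneMod.sum_coeff_mem_eq_one {G : Type*} [Group G] [Fintype G]
    {N : Subgroup G} [N.Normal] {u : MonoidAlgebra ℤ G} (hu : MapsToOneMod N u) :
    ∑ g with g ∈ N, u.coeff g = 1 := by
  have h := congrArg (fun v => v.coeff 1) hu
  rw [MonoidAlgebra.mapDomainRingHom_apply, MonoidAlgebra.coeff_mapDomain_eq_sum,
    MonoidAlgebra.coeff_one_one] at h
  simpa [QuotientGroup.eq_one_iff] using h

section ConjugacyClasses
open Classical

variable {G : Type*} [Group G] [Fintype G]

theorem card_filter_isConj (n : G) :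
    #{z | IsConj n z} = (centralizer {n}).index := by
  rw [← relIndex_top_right, ← card_conjClass]
  congr 1
  ext z
  simp [mem_conjClass, isConj_iff]

theorem sum_mul_partialAug (R : Finset G) (a : G → ℤ) (u : MonoidAlgebra ℤ G) :
    ∑ n ∈ R, a n * partialAug u n = ∑ y, (∑ n ∈ R with IsConj n y, a n) * u.coeff y := by
  simp only [partialAug, mul_sum, sum_mul, sum_filter]
  rw [sum_comm]
  refine sum_congr rfl fun y _ => sum_congr rfl fun n _ => ?_
  split_ifs <;> simp

variable {N : Subgroup G} {R : Finset G}

theorem pairwiseDisjoint_conjClass (hRN : ∀ r ∈ R, r ∈ N)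
    (hR : ∀ g ∈ N, ∃! r, r ∈ R ∧ ∃ c ∈ N, c * g * c⁻¹ = r) :
    (R : Set G).PairwiseDisjoint N.conjClass := by
  intro n₁ hn₁ n₂ hn₂ hne
  rw [Function.onFun, disjoint_left]
  rintro z hz₁ hz₂
  obtain ⟨c₁, hc₁, rfl⟩ := mem_conjClass.mp hz₁
  obtain ⟨c₂, hc₂, hz⟩ := mem_conjClass.mp hz₂
  have hzN : c₁ * n₁ * c₁⁻¹ ∈ N := N.mul_mem (N.mul_mem hc₁ (hRN n₁ hn₁)) (N.inv_mem hc₁)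
  refine hne ((hR _ hzN).unique ⟨hn₁, c₁⁻¹, N.inv_mem hc₁, by group⟩
    ⟨hn₂, c₂⁻¹, N.inv_mem hc₂, ?_⟩)
  rw [← hz]
  group

variable [N.Normal]

theorem filter_isConj_eq_biUnion_conjClass
    (hR : ∀ g ∈ N, ∃! r, r ∈ R ∧ ∃ c ∈ N, c * g * c⁻¹ = r) {y : G} (hy : y ∈ N) :
    ({z | IsConj y z} : Finset G) = {n ∈ R | IsConj n y}.biUnion N.conjClass := by
  ext z
  simp only [mem_filter, mem_univ, true_and, mem_biUnion, mem_conjClass]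
  constructor
  · intro hyz
    have hzN : z ∈ N := by
      obtain ⟨c, rfl⟩ := isConj_iff.mp hyz
      exact ‹N.Normal›.conj_mem y hy c
    obtain ⟨r, ⟨hr, c, hc, rfl⟩, -⟩ := hR z hzN
    exact ⟨_, ⟨hr, (isConj_iff.mpr ⟨c, rfl⟩).symm.trans hyz.symm⟩, c⁻¹, N.inv_mem hc, by group⟩
  · rintro ⟨n, ⟨-, hny⟩, c, -, rfl⟩
    exact hny.symm.trans (isConj_iff.mpr ⟨c, rfl⟩)

theorem card_filter_isConj_eq_sum_card_conjClass (hRN : ∀ r ∈ R, r ∈ N)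
    (hR : ∀ g ∈ N, ∃! r, r ∈ R ∧ ∃ c ∈ N, c * g * c⁻¹ = r) {y : G} (hy : y ∈ N) :
    #{z | IsConj y z} = ∑ n ∈ R with IsConj n y, #(N.conjClass n) := by
  rw [filter_isConj_eq_biUnion_conjClass hR hy,
    card_biUnion ((pairwiseDisjoint_conjClass hRN hR).subset (coe_subset.mpr (filter_subset _ _)))]

theorem sum_relIndex_centralizer_filter_isConj (hRN : ∀ r ∈ R, r ∈ N)
    (hR : ∀ g ∈ N, ∃! r, r ∈ R ∧ ∃ c ∈ N, c * g * c⁻¹ = r) {y : G} (hy : y ∈ N) :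
    ∑ n ∈ R with IsConj n y, N.relIndex (centralizer {n}) = N.index := by
  have hpos : 0 < #{z | IsConj y z} := 
    card_pos.mpr ⟨y, mem_filter.mpr ⟨mem_univ y, IsConj.refl y⟩⟩
  refine Nat.eq_of_mul_eq_mul_right hpos ?_
  calc (∑ n ∈ R with IsConj n y, N.relIndex (centralizer {n})) * #{z | IsConj y z}
      = ∑ n ∈ R with IsConj n y, N.index * #(N.conjClass n) := by
        rw [sum_mul]
        refine sum_congr rfl fun n hn => ?_
        have hny : IsConj n y := (mem_filter.mp hn).2
        have hclass : #{z | IsConj y z} = #{z | IsConj n z} :=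
          congrArg card (filter_congr fun z _ => ⟨hny.trans, hny.symm.trans⟩)
        rw [hclass, card_filter_isConj, relIndex_mul_index_comm, card_conjClass, mul_comm]
    _ = N.index * #{z | IsConj y z} := by
        rw [← mul_sum, card_filter_isConj_eq_sum_card_conjClass hRN hR hy]

theorem filter_isConj_eq_empty_of_notMem (hRN : ∀ r ∈ R, r ∈ N) {y : G} (hy : y ∉ N) :
    {n ∈ R | IsConj n y} = ∅ :=
  filter_eq_empty_iff.mpr fun n hn hny => hy <| by
    obtain ⟨c, rfl⟩ := isConj_iff.mp hny
    exact ‹N.Normal›.conj_mem n (hRN n hn) c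

end ConjugacyClasses

theorem cliffWeiss_index_sum_general {G : Type*} [Group G] [Fintype G]
    (N : Subgroup G) [N.Normal]
    (u : (MonoidAlgebra ℤ G)ˣ)
    (huN : MapsToOneMod N (u : MonoidAlgebra ℤ G))
    (R : Finset G) (hRN : ∀ r ∈ R, r ∈ N)
    (hR : ∀ g ∈ N, ∃! r, r ∈ R ∧ ∃ c ∈ N, c * g * c⁻¹ = r) :
    ∑ n ∈ R, (N.relIndex (Subgroup.centralizer {n}) : ℤ) * partialAug (↑u) n
      = (N.index : ℤ) := by
  classical
  have hweight : ∀ y, ∑ n ∈ R with IsConj n y, (N.relIndex (centralizer {n}) : ℤ)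
      = if y ∈ N then (N.index : ℤ) else 0 := by
    intro y
    split_ifs with hy
    · exact_mod_cast sum_relIndex_centralizer_filter_isConj hRN hR hy
    · rw [filter_isConj_eq_empty_of_notMem hRN hy, sum_empty]
  calc ∑ n ∈ R, (N.relIndex (centralizer {n}) : ℤ) * partialAug (↑u) n
      = ∑ y, (if y ∈ N then (N.index : ℤ) else 0) * (u : MonoidAlgebra ℤ G).coeff y := by
        simp only [sum_mul_partialAug, hweight]
    _ = N.index * ∑ y with y ∈ N, (u : MonoidAlgebra ℤ G).coeff y := by
        simp only [ite_mul, zero_mul, mul_sum, sum_filter, mul_ite, mul_zero]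
    _ = N.index := by
        rw [huN.sum_coeff_mem_eq_one, mul_one]

/-- Equation (5) of the paper: if `N` is a nilpotent normal subgroup of the finite
group `G` and `u` is a torsion element of `V(ℤG, N)`, then
`∑_{n^N} [C_G(n) : C_N(n)] · ε_n(u) = [G : N]`, the sum running over a set `R` of
representatives of the conjugacy classes of `N`. -/
theorem cliffWeiss_index_sum {G : Type*} [Group G] [Fintype G]
    (N : Subgroup G) [N.Normal] (hNnil : Group.IsNilpotent ↥N)
    (u : (MonoidAlgebra ℤ G)ˣ) (hu : IsOfFinOrder u)
    (hu1 : AugOne (u : MonoidAlgebra ℤ G))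
    (huN : MapsToOneMod N (u : MonoidAlgebra ℤ G))
    (R : Finset G) (hRN : ∀ r ∈ R, r ∈ N)
    (hR : ∀ g ∈ N, ∃! r, r ∈ R ∧ ∃ c ∈ N, c * g * c⁻¹ = r) :
    ∑ n ∈ R, (N.relIndex (Subgroup.centralizer {n}) : ℤ) * partialAug (↑u) n
      = (N.index : ℤ) :=
  cliffWeiss_index_sum_general N u huN R hRN hR
end

section
/- Let p be a prime, e a positive integer, and l_1, …, l_e nonnegative integers, and let A be a finite abelian group isomorphic to the direct product ∏_{j=1}^{e} (C_{p^j})^{l_j} of l_j copies of the cyclic group of order p^j for each j. For 1 ≤ i ≤ e set L_i = Σ_{j=i}^{e} l_j and assume L_i ≥ 1. Then the number of cyclic subgroups of A of order p^i equals ((p^{L_i} − 1)/(p − 1)) · p^{(L_i − 1)(i − 1) + Σ_{j<i} l_j·j}. -/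
/-!
Every cyclic subgroup of order `n` has exactly `φ n` generators, so the number of cyclic subgroups
of order `p ^ i` times `φ (p ^ i) = p ^ (i - 1) * (p - 1)` is the number of elements of order
`p ^ i`, i.e. the number of `p ^ i`-torsion elements minus the number of `p ^ (i - 1)`-torsion
elements. In `∏ j, (C_{p^j})^{l_j}` the `p ^ k`-torsion has `p ^ (∑ j, min j k * l j)` elements,
which for `k = i` and `k = i - 1` is `p ^ (S + k * L_i)` with `S = ∑_{j < i} l_j * j`.
-/

open Finset Subgroup

section Counting

variable {G : Type*} [Group G]

lemma Subgroup.card_zpowers_eq_eq_totient (C : Subgroup G) [IsCyclic C] [Finite C] :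
    Nat.card {a : G // zpowers a = C} = (Nat.card C).totient := by
  classical
  have : Fintype C := Fintype.ofFinite C
  let generatorEquiv : {a : G // zpowers a = C} ≃ {g : C // orderOf g = Nat.card C} :=
    { toFun a := ⟨⟨a, a.2.le (mem_zpowers _)⟩,
        by rw [orderOf_mk, ← Nat.card_zpowers, a.2]⟩
      invFun g := ⟨g, eq_of_le_of_card_ge (zpowers_le.mpr g.1.2)
        (by rw [Nat.card_zpowers, orderOf_coe, g.2])⟩
      left_inv _ := rfl
      right_inv _ := rfl }
  rw [Nat.card_congr generatorEquiv, Nat.card_eq_fintype_card, Fintype.card_subtype,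
    IsCyclic.card_orderOf_eq_totient (Nat.card_eq_fintype_card (α := C) ▸ dvd_rfl)]

lemma card_cyclic_subgroups_mul_totient [Finite G] (n : ℕ) :
    Nat.card {C : Subgroup G // IsCyclic C ∧ Nat.card C = n} * n.totient =
      Nat.card {a : G // orderOf a = n} := by
  have : Fintype {C : Subgroup G // IsCyclic C ∧ Nat.card C = n} := Fintype.ofFinite _
  let span : {a : G // orderOf a = n} → {C : Subgroup G // IsCyclic C ∧ Nat.card C = n} :=
    fun a => ⟨zpowers a, inferInstance, by rw [Nat.card_zpowers, a.2]⟩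
  have card_fiber : ∀ C, Nat.card {a // span a = C} = n.totient := fun C => by
    have : IsCyclic C.1 := C.2.1
    rw [← congrArg Nat.totient C.2.2, ← C.1.card_zpowers_eq_eq_totient]
    exact Nat.card_congr
      { toFun a := ⟨a.1, congrArg Subtype.val a.2⟩
        invFun a := ⟨⟨a, by rw [← Nat.card_zpowers, a.2, C.2.2]⟩, Subtype.ext a.2⟩
        left_inv _ := rfl
        right_inv _ := rfl }
  rw [← Nat.card_congr (Equiv.sigmaFiberEquiv span), Nat.card_sigma,
    Finset.sum_congr rfl fun C _ => card_fiber C, sum_const, card_univ, smul_eq_mul,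
    Nat.card_eq_fintype_card]

lemma card_orderOf_eq_prime_pow_succ_add [Finite G] {p : ℕ} (hp : p.Prime) (k : ℕ) :
    Nat.card {x : G // orderOf x = p ^ (k + 1)} + Nat.card {x : G // x ^ p ^ k = 1} =
      Nat.card {x : G // x ^ p ^ (k + 1) = 1} := by
  classical
  have : Fintype G := Fintype.ofFinite G
  have : Fact p.Prime := ⟨hp⟩
  have hlt : p ^ k < p ^ (k + 1) := Nat.pow_lt_pow_right hp.one_lt (lt_add_one k)
  have split : ∀ x : G, x ^ p ^ (k + 1) = 1 ↔ orderOf x = p ^ (k + 1) ∨ x ^ p ^ k = 1 := by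
    intro x
    refine ⟨fun h => or_iff_not_imp_right.mpr fun h' => orderOf_eq_prime_pow h' h, ?_⟩
    rintro (h | h)
    · exact h ▸ pow_orderOf_eq_one x
    · rw [pow_succ, pow_mul, h, one_pow]
  have disjoint : Disjoint (fun x : G => orderOf x = p ^ (k + 1)) (fun x => x ^ p ^ k = 1) :=
    Pi.disjoint_iff.mpr fun x => Prop.disjoint_iff.mpr fun ⟨h, h'⟩ =>
      pow_ne_one_of_lt_orderOf (pow_ne_zero k hp.ne_zero) (h ▸ hlt) h'
  simp only [Nat.card_eq_fintype_card]
  rw [← Fintype.card_subtype_or_disjoint _ _ disjoint]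
  exact Fintype.card_congr (Equiv.subtypeEquivRight split).symm

end Counting

lemma card_pow_eq_one_congr {M N : Type*} [Monoid M] [Monoid N] (f : M ≃* N) (n : ℕ) :
    Nat.card {x : M // x ^ n = 1} = Nat.card {y : N // y ^ n = 1} :=
  Nat.card_congr (f.toEquiv.subtypeEquiv fun x => by simp [← map_pow])

lemma card_pi_pow_eq_one {ι : Type*} [Fintype ι] (M : ι → Type*) [∀ i, Monoid (M i)]
    (n : ℕ) :
    Nat.card {x : ∀ i, M i // x ^ n = 1} = ∏ i, Nat.card {y : M i // y ^ n = 1} := by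
  rw [← Nat.card_pi]
  exact Nat.card_congr ((Equiv.subtypeEquivRight fun _ => funext_iff).trans
    (Equiv.subtypePiEquivPi (p := fun i (y : M i) => y ^ n = 1)))

lemma IsCyclic.card_pow_eq_one {G : Type*} [CommGroup G] [IsCyclic G] [Finite G] (d : ℕ) :
    Nat.card {x : G // x ^ d = 1} = (Nat.card G).gcd d := by
  rw [← IsCyclic.card_powMonoidHom_ker]
  exact Nat.card_congr
    (Equiv.subtypeEquivRight fun x => by rw [MonoidHom.mem_ker, powMonoidHom_apply])

lemma Nat.gcd_pow_pow (p a b : ℕ) : (p ^ a).gcd (p ^ b) = p ^ min a b := by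
  rcases le_total a b with h | h
  · rw [min_eq_left h, Nat.gcd_eq_left (pow_dvd_pow p h)]
  · rw [min_eq_right h, Nat.gcd_eq_right (pow_dvd_pow p h)]

lemma card_pow_eq_one_of_mulEquiv_pi {A : Type*} [Monoid A] {p e : ℕ} (hp : p ≠ 0)
    (l : ℕ → ℕ)
    (f : A ≃* ((j : (Icc 1 e : Finset ℕ)) →
      Fin (l j) → Multiplicative (ZMod (p ^ (j : ℕ)))))
    (k : ℕ) :
    Nat.card {x : A // x ^ p ^ k = 1} = p ^ ∑ j ∈ Icc 1 e, min j k * l j := by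
  have (j : ℕ) : NeZero (p ^ j) := ⟨pow_ne_zero j hp⟩
  have card_zmod (j : ℕ) :
      Nat.card {y : Multiplicative (ZMod (p ^ j)) // y ^ p ^ k = 1} = p ^ min j k := by
    rw [IsCyclic.card_pow_eq_one, Nat.card_congr Multiplicative.toAdd, Nat.card_zmod,
      Nat.gcd_pow_pow]
  simp only [card_pow_eq_one_congr f, card_pi_pow_eq_one, card_zmod, prod_const, card_univ,
    Fintype.card_fin]
  rw [prod_coe_sort (Icc 1 e) fun j => (p ^ min j k) ^ l j, ← prod_pow_eq_pow_sum]
  simp only [pow_mul]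

lemma sum_min_mul_eq (l : ℕ → ℕ) {e i m : ℕ} (hi : 1 ≤ i) (hie : i ≤ e + 1)
    (hmi : m ≤ i) (him : i ≤ m + 1) :
    ∑ j ∈ Icc 1 e, min j m * l j = ∑ j ∈ Ico 1 i, l j * j + m * ∑ j ∈ Icc i e, l j := by
  rw [← Ico_add_one_right_eq_Icc, ← Ico_add_one_right_eq_Icc, ← sum_Ico_consecutive _ hi hie,
    mul_sum]
  congr 1 <;> refine sum_congr rfl fun j hj => ?_ <;> rw [mem_Ico] at hj
  · rw [min_eq_left (by omega), mul_comm]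
  · rw [min_eq_right (by omega)]

theorem count_cyclic_subgroups_of_order_general {A : Type*} [CommGroup A]
    (p e : ℕ) (hp : p.Prime) (l : ℕ → ℕ)
    (hiso : Nonempty
      (A ≃* ((j : (Finset.Icc 1 e : Finset ℕ)) →
        Fin (l (j : ℕ)) → Multiplicative (ZMod (p ^ (j : ℕ))))))
    (i : ℕ) (hi1 : 1 ≤ i) (hie : i ≤ e)
    (hL : 1 ≤ ∑ j ∈ Finset.Icc i e, l j) :
    Nat.card {C : Subgroup A // IsCyclic ↥C ∧ Nat.card ↥C = p ^ i} =
      ((p ^ (∑ j ∈ Finset.Icc i e, l j) - 1) / (p - 1)) *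
        p ^ (((∑ j ∈ Finset.Icc i e, l j) - 1) * (i - 1) +
          ∑ j ∈ Finset.Ico 1 i, l j * j) := by
  obtain ⟨f⟩ := hiso
  have (j : ℕ) : NeZero (p ^ j) := ⟨pow_ne_zero j hp.ne_zero⟩
  have : Finite A := Finite.of_equiv _ f.symm.toEquiv
  obtain ⟨k, rfl⟩ := Nat.exists_eq_add_of_le' hi1
  set L := ∑ j ∈ Icc (k + 1) e, l j
  set S := ∑ j ∈ Ico 1 (k + 1), l j * j
  have card_torsion (m : ℕ) (hkm : k ≤ m) (hmk : m ≤ k + 1) :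
      Nat.card {x : A // x ^ p ^ m = 1} = p ^ (S + m * L) := by
    rw [card_pow_eq_one_of_mulEquiv_pi hp.ne_zero l f,
      sum_min_mul_eq l hi1 (by omega) hmk (by omega)]
  have card_order :
      Nat.card {x : A // orderOf x = p ^ (k + 1)} = p ^ (S + k * L) * (p ^ L - 1) := by
    have h := card_orderOf_eq_prime_pow_succ_add (G := A) hp k
    rw [card_torsion k le_rfl (by omega), card_torsion (k + 1) (by omega) le_rfl,
      add_one_mul, ← add_assoc, pow_add p (S + k * L)] at h
    rw [Nat.mul_sub_one]
    omega
  obtain ⟨q, hq⟩ : p - 1 ∣ p ^ L - 1 := by simpa using Nat.sub_dvd_pow_sub_pow p 1 L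
  obtain ⟨M, hM⟩ := Nat.exists_eq_add_of_le' hL
  refine Nat.eq_of_mul_eq_mul_right (Nat.totient_pos.mpr (pow_pos hp.pos (k + 1))) ?_
  rw [card_cyclic_subgroups_mul_totient, card_order, Nat.totient_prime_pow_succ hp, hq,
    Nat.mul_div_cancel_left q (Nat.sub_pos_of_lt hp.one_lt), hM]
  simp only [add_tsub_cancel_right]
  ring

/-- Lemma (number of cyclic subgroups of given order): let `p` be a prime and
`A ≅ ∏_{j=1}^{e} (C_{p^j})^{l_j}`. For `1 ≤ i ≤ e` let `L_i = ∑_{j=i}^{e} l_j` and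
assume `L_i ≥ 1`. Then the number of cyclic subgroups of `A` of order `p^i` is
`((p^{L_i} - 1)/(p - 1)) · p^{(L_i - 1)(i - 1) + ∑_{j<i} l_j · j}`. -/
theorem count_cyclic_subgroups_of_order {A : Type*} [CommGroup A] [Fintype A]
    (p e : ℕ) (hp : p.Prime) (he : 1 ≤ e) (l : ℕ → ℕ)
    (hiso : Nonempty
      (A ≃* ((j : (Finset.Icc 1 e : Finset ℕ)) →
        Fin (l (j : ℕ)) → Multiplicative (ZMod (p ^ (j : ℕ))))))
    (i : ℕ) (hi1 : 1 ≤ i) (hie : i ≤ e)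
    (hL : 1 ≤ ∑ j ∈ Finset.Icc i e, l j) :
    Nat.card {C : Subgroup A // IsCyclic ↥C ∧ Nat.card ↥C = p ^ i} =
      ((p ^ (∑ j ∈ Finset.Icc i e, l j) - 1) / (p - 1)) *
        p ^ (((∑ j ∈ Finset.Icc i e, l j) - 1) * (i - 1) +
          ∑ j ∈ Finset.Ico 1 i, l j * j) :=
  count_cyclic_subgroups_of_order_general p e hp l hiso i hi1 hie hL
end

section
/- Let A be a finite abelian group and let K be a subgroup of A with A/K cyclic. Then Σ_{L ∈ Cocyc(A), L ≤ K} α_L = 1, the sum running over all subgroups L of A contained in K such that A/L is cyclic. -/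
/-!
Intersecting with the primary components `A_p` identifies the subgroups of `A` with the families
of subgroups of the `A_p`. This respects inclusion and cocyclicity (a finite abelian group is
cyclic iff its Sylow subgroups are), and turns `α_L` into `∏_p α_{L_p}`, so the sum factors as a
product over `p` of the same sums inside the `p`-groups `A_p`.

In a `p`-group `G` with `G/K` cyclic, every cocyclic `M < K` lies in exactly one `N ≤ K` with
`[N : M] = p`: the preimage of the unique subgroup of order `p` of the cyclic `p`-group `G/M`,
which lies in `K/M ≠ 1`. Counting the pairs `M < N` both ways over the set `T` of cocyclic
`N ≤ K` gives `∑_{N ∈ T} #{M} = #T - 1`, hence `∑_{N ∈ T} (1 - #{M}) = 1`.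
-/

open Subgroup
open CommGroup (primaryComponent)
open scoped Finset

section Cyclic

variable {G : Type*} [CommGroup G]

theorem QuotientGroup.isCyclic_of_le {M N : Subgroup G} (h : M ≤ N) [IsCyclic (G ⧸ M)] :
    IsCyclic (G ⧸ N) :=
  isCyclic_of_surjective (QuotientGroup.map M N (MonoidHom.id G) h) fun y =>
    QuotientGroup.induction_on y fun x => ⟨x, rfl⟩

theorem QuotientGroup.isCyclic_subgroupOf_iff (B L : Subgroup G) :
    IsCyclic (B ⧸ L.subgroupOf B) ↔ IsCyclic (B.map (QuotientGroup.mk' L)) :=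
  ((QuotientGroup.quotientMulEquivOfEq
    (by rw [MonoidHom.ker_domRestrict, QuotientGroup.ker_mk'])).trans
    ((QuotientGroup.quotientKerEquivRange _).trans
      (MulEquiv.subgroupCongr (MonoidHom.domRestrict_range B _)))).isCyclic

theorem IsCyclic.eq_ker_powMonoidHom_card [Finite G] [IsCyclic G] (H : Subgroup G) :
    H = (powMonoidHom (Nat.card H)).ker := by
  refine eq_of_le_of_card_ge (fun x hx => ?_) ?_
  · exact orderOf_dvd_iff_pow_eq_one.mp (H.orderOf_dvd_natCard hx)
  · rw [IsCyclic.card_powMonoidHom_ker]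
    exact Nat.gcd_le_right _ Nat.card_pos

theorem IsCyclic.subgroup_eq_of_card_eq [Finite G] [IsCyclic G] {H₁ H₂ : Subgroup G}
    (h : Nat.card H₁ = Nat.card H₂) : H₁ = H₂ := by
  rw [IsCyclic.eq_ker_powMonoidHom_card H₁, IsCyclic.eq_ker_powMonoidHom_card H₂, h]

theorem IsCyclic.of_exists_sylow_isCyclic [Finite G]
    (h : ∀ (p : ℕ) [Fact p.Prime], p ∣ Nat.card G → ∃ P : Sylow p G, IsCyclic P) :
    IsCyclic G := by
  have hexp := Monoid.exponent_ne_zero_of_finite (G := G)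
  refine IsCyclic.of_exponent_eq_card (dvd_antisymm Group.exponent_dvd_nat_card ?_)
  refine (Nat.factorization_prime_le_iff_dvd Nat.card_pos.ne' hexp).mp fun p hp => ?_
  have := Fact.mk hp
  by_cases hpG : p ∣ Nat.card G
  · obtain ⟨P, hP⟩ := h p hpG
    obtain ⟨g, hg⟩ := IsCyclic.exists_ofOrder_eq_natCard (α := P)
    rw [← hp.pow_dvd_iff_le_factorization hexp, ← P.card_eq_multiplicity, ← hg,
      ← Subgroup.orderOf_coe]
    exact Monoid.order_dvd_exponent _
  · simp [Nat.factorization_eq_zero_of_not_dvd hpG]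

end Cyclic

section PrimaryComponents

variable {G : Type*} [CommGroup G]

instance Nat.fact_prime_of_mem_primeFactors {n : ℕ} (p : n.primeFactors) : Fact (p : ℕ).Prime :=
  ⟨Nat.prime_of_mem_primeFactors p.2⟩

theorem IsPGroup.le_primaryComponent {p : ℕ} {H : Subgroup G} (hH : IsPGroup p H) :
    H ≤ primaryComponent G p := fun x hx =>
  let ⟨k, hk⟩ := hH ⟨x, hx⟩
  ⟨k, by simpa using congrArg Subtype.val hk⟩

variable [Finite G]

theorem Subgroup.iSup_inf_primaryComponent (L : Subgroup G) :
    ⨆ p : (Nat.card G).primeFactors, L ⊓ primaryComponent G p = L := by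
  set S := ⨆ p : (Nat.card G).primeFactors, L ⊓ primaryComponent G p
  have hSL : S ≤ L := iSup_le fun _ => inf_le_left
  refine eq_of_le_of_card_ge hSL (Nat.le_of_dvd Nat.card_pos ?_)
  refine (Nat.factorization_prime_le_iff_dvd Nat.card_pos.ne' Nat.card_pos.ne').mp fun q hq => ?_
  by_cases hqL : q ∣ Nat.card L
  · have := Fact.mk hq
    have hqG : q ∈ (Nat.card G).primeFactors :=
      Nat.mem_primeFactors.mpr ⟨hq, hqL.trans (card_subgroup_dvd_card L), Nat.card_pos.ne'⟩
    let P : Sylow q L := default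
    have hPS : P.map L.subtype ≤ S :=
      le_iSup_of_le ⟨q, hqG⟩ (le_inf (map_subtype_le _) (P.isPGroup'.map _).le_primaryComponent)
    rw [← hq.pow_dvd_iff_le_factorization Nat.card_pos.ne', ← P.card_eq_multiplicity,
      ← card_map_of_injective L.subtype_injective]
    exact card_dvd_of_le hPS
  · simp [Nat.factorization_eq_zero_of_not_dvd hqL]

theorem CommGroup.iSupIndep_primaryComponent :
    iSupIndep fun p : (Nat.card G).primeFactors => primaryComponent G p := by
  classical
  have := fun p : (Nat.card G).primeFactors => Fintype.ofFinite (primaryComponent G p)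
  refine independent_of_coprime_order (fun _ _ _ x y _ _ => Commute.all x y) fun p q hpq => ?_
  obtain ⟨m, hm⟩ := IsPGroup.iff_card.mp (primaryComponent.isPGroup (G := G) (p := p))
  obtain ⟨n, hn⟩ := IsPGroup.iff_card.mp (primaryComponent.isPGroup (G := G) (p := q))
  rw [Fintype.card_eq_nat_card, Fintype.card_eq_nat_card, hm, hn]
  exact Nat.Coprime.pow _ _ ((Nat.coprime_primes Fact.out Fact.out).mpr
    (Subtype.coe_injective.ne hpq))

theorem CommGroup.subgroupOf_iSup_map_primaryComponent
    (g : ∀ p : (Nat.card G).primeFactors, Subgroup (primaryComponent G p))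
    (p : (Nat.card G).primeFactors) :
    (⨆ q, (g q).map (primaryComponent G q).subtype).subgroupOf
      (primaryComponent G p) = g p := by
  set f := fun q => (g q).map (primaryComponent G q).subtype
  have hf : ∀ q, f q ≤ primaryComponent G q := fun q => map_subtype_le _
  have hrest : (⨆ (q) (_ : q ≠ p), f q) ⊓ primaryComponent G p = ⊥ :=
    ((CommGroup.iSupIndep_primaryComponent p).symm.mono_left (iSup₂_mono fun q _ => hf q)).eq_bot
  calc _ = ((⨆ q, f q) ⊓ primaryComponent G p).subgroupOf _ :=
        (inf_subgroupOf_right _ _).symm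
    _ = (f p).subgroupOf (primaryComponent G p) := by
        rw [iSup_split_single f p, sup_inf_assoc_of_le _ (hf p), hrest, sup_bot_eq]
    _ = g p := comap_map_eq_self_of_injective (subtype_injective _) _

variable (G) in
noncomputable def CommGroup.subgroupOrderIsoPiPrimaryComponent :
    Subgroup G ≃o ∀ p : (Nat.card G).primeFactors, Subgroup (primaryComponent G p) :=
  Equiv.toOrderIso
    { toFun := fun L p => L.subgroupOf _
      invFun := fun g => ⨆ p, (g p).map (primaryComponent G p).subtype
      left_inv := fun L => by
        simp only [subgroupOf_map_subtype, L.iSup_inf_primaryComponent]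
      right_inv := fun g => funext (CommGroup.subgroupOf_iSup_map_primaryComponent g) }
    (fun _ _ h _ => comap_mono h) (fun _ _ h => iSup_mono fun p => map_mono (h p))

theorem CommGroup.isCyclic_quotient_iff_primaryComponent (L : Subgroup G) :
    IsCyclic (G ⧸ L) ↔ ∀ p : (Nat.card G).primeFactors,
      IsCyclic (primaryComponent G p ⧸ L.subgroupOf (primaryComponent G p)) := by
  simp only [QuotientGroup.isCyclic_subgroupOf_iff]
  refine ⟨fun _ p => inferInstance, fun h => IsCyclic.of_exists_sylow_isCyclic fun q _ hq => ?_⟩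
  have hqG : q ∈ (Nat.card G).primeFactors := Nat.mem_primeFactors.mpr
    ⟨Fact.out, hq.trans (card_quotient_dvd_card L), Nat.card_pos.ne'⟩
  have := h ⟨q, hqG⟩
  let P : Sylow q G := default
  exact ⟨P.mapSurjective (QuotientGroup.mk'_surjective L),
    Subgroup.isCyclic_of_le (map_mono P.isPGroup'.le_primaryComponent)⟩

end PrimaryComponents

section PGroup

noncomputable def localAlpha (G : Type*) [CommGroup G] (p : ℕ) (N : Subgroup G) : ℤ :=
  1 - Nat.card {M : Subgroup G // IsCyclic (G ⧸ M) ∧ M < N ∧ M.relIndex N = p}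

variable {G : Type*} [CommGroup G] [Finite G] {p : ℕ} [Fact p.Prime]

theorem IsPGroup.existsUnique_relIndex_eq_prime (hG : IsPGroup p G) {M K : Subgroup G}
    [IsCyclic (G ⧸ M)] (hMK : M < K) :
    ∃! N : Subgroup G, M < N ∧ N ≤ K ∧ M.relIndex N = p := by
  set π := QuotientGroup.mk' M
  have hrel : ∀ N, M.relIndex N = Nat.card (N.map π) := fun N => by
    rw [← relIndex_ker, QuotientGroup.ker_mk']
  have hcomap : ∀ {N}, M ≤ N → (N.map π).comap π = N := fun h => by
    rw [comap_map_eq, QuotientGroup.ker_mk', sup_of_le_left h]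
  obtain ⟨H, hHK, hHp⟩ : ∃ H ≤ K.map π, Nat.card H = p := by
    have hne : Nat.card (K.map π) ≠ 1 := by
      rw [Ne, card_eq_one, Subgroup.map_eq_bot_iff, QuotientGroup.ker_mk']
      exact not_le_of_gt hMK
    obtain ⟨x, hx⟩ := exists_prime_orderOf_dvd_card' p
      (((hG.to_subgroup K).map π).card_eq_or_dvd.resolve_left hne)
    exact ⟨zpowers (x : G ⧸ M), zpowers_le.mpr x.2, by rw [Nat.card_zpowers, orderOf_coe, hx]⟩
  have hrelH : M.relIndex (H.comap π) = p := by
    rw [hrel, map_comap_eq_self_of_surjective (QuotientGroup.mk'_surjective M), hHp]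
  refine ⟨H.comap π, ⟨?_, ?_, hrelH⟩, fun N ⟨hMN, _, hN⟩ => ?_⟩
  · have hMH : M ≤ H.comap π := by
      simpa only [π, QuotientGroup.ker_mk'] using MonoidHom.ker_le_comap π H
    refine lt_of_le_of_ne hMH fun h => ?_
    rw [← h, relIndex_self] at hrelH
    exact (Fact.out : p.Prime).ne_one hrelH.symm
  · exact (comap_mono hHK).trans (hcomap hMK.le).le
  · rw [← hcomap hMN.le,
      IsCyclic.subgroup_eq_of_card_eq (H₁ := N.map π) (H₂ := H) (by rw [← hrel, hN, hHp])]

theorem IsPGroup.sum_localAlpha_eq_one (hG : IsPGroup p G) {K : Subgroup G} [IsCyclic (G ⧸ K)]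
    (T : Finset (Subgroup G)) (hT : ∀ N, N ∈ T ↔ IsCyclic (G ⧸ N) ∧ N ≤ K) :
    ∑ N ∈ T, localAlpha G p N = 1 := by
  classical
  let r : Subgroup G → Subgroup G → Prop := fun M N => M < N ∧ M.relIndex N = p
  have hKT : K ∈ T := (hT K).mpr ⟨inferInstance, le_rfl⟩
  have hbelow : ∀ N ∈ T, localAlpha G p N = 1 - #(T.bipartiteBelow r N) := fun N hN => by
    rw [localAlpha, ← Nat.card_eq_finsetCard]
    congr 2
    refine Nat.card_congr (Equiv.subtypeEquivRight fun M => ?_)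
    rw [Finset.mem_bipartiteBelow, hT]
    exact ⟨fun ⟨hM, hMN, hrel⟩ => ⟨⟨hM, hMN.le.trans ((hT N).mp hN).2⟩, hMN, hrel⟩,
      fun ⟨⟨hM, _⟩, hMN, hrel⟩ => ⟨hM, hMN, hrel⟩⟩
  have habove : ∀ M ∈ T, (#(T.bipartiteAbove r M) : ℤ) = 1 - if M = K then 1 else 0 := by
    intro M hM
    obtain ⟨hMcyc, hMK⟩ := (hT M).mp hM
    split_ifs with hMeq
    · subst hMeq
      rw [sub_self, Nat.cast_eq_zero, Finset.card_eq_zero, Finset.bipartiteAbove,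
        Finset.filter_eq_empty_iff]
      exact fun N hN hMN => not_lt_of_ge ((hT N).mp hN).2 hMN.1
    · obtain ⟨N, ⟨hMN, hNK, hrel⟩, huniq⟩ :=
        hG.existsUnique_relIndex_eq_prime (lt_of_le_of_ne hMK hMeq)
      have hNT : N ∈ T := (hT N).mpr ⟨QuotientGroup.isCyclic_of_le hMN.le, hNK⟩
      rw [sub_zero, Nat.cast_eq_one, Finset.card_eq_one]
      refine ⟨N, Finset.eq_singleton_iff_unique_mem.mpr
        ⟨(Finset.mem_bipartiteAbove r).mpr ⟨hNT, hMN, hrel⟩, fun N' hN' => ?_⟩⟩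
      obtain ⟨hN'T, hMN', hrel'⟩ := (Finset.mem_bipartiteAbove r).mp hN'
      exact huniq N' ⟨hMN', ((hT N').mp hN'T).2, hrel'⟩
  calc ∑ N ∈ T, localAlpha G p N = #T - ∑ N ∈ T, (#(T.bipartiteBelow r N) : ℤ) := by
        rw [Finset.sum_congr rfl hbelow, Finset.sum_sub_distrib, Finset.sum_const, nsmul_one]
    _ = #T - ∑ M ∈ T, (1 - if M = K then 1 else 0 : ℤ) := by
        rw [← Nat.cast_sum, ← Finset.sum_card_bipartiteAbove_eq_sum_card_bipartiteBelow,
          Nat.cast_sum, Finset.sum_congr rfl habove]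
    _ = 1 := by
        rw [Finset.sum_sub_distrib, Finset.sum_ite_eq', if_pos hKT, Finset.sum_const, nsmul_one]
        ring

end PGroup

/-- `α_{K,p}` from the paper: `1` minus the number of cocyclic subgroups `L` of the
`p`-primary component `A_p` of `A` that are proper subgroups of `K_p = K ∩ A_p` of
index `p` (and `0` for non-prime `p`, which is never used). -/
noncomputable def alphaP (A : Type*) [CommGroup A] (p : ℕ) (K : Subgroup A) : ℤ :=
  if hp : p.Prime then
    haveI : Fact p.Prime := ⟨hp⟩
    1 - (Nat.card {L : Subgroup ↥(CommGroup.primaryComponent A p) //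
          IsCyclic (↥(CommGroup.primaryComponent A p) ⧸ L) ∧
          L < K.subgroupOf (CommGroup.primaryComponent A p) ∧
          L.relIndex (K.subgroupOf (CommGroup.primaryComponent A p)) = p} : ℤ)
  else 0

/-- `α_K = ∏_{p ∣ |A|} α_{K,p}`. -/
noncomputable def alphaCW (A : Type*) [CommGroup A] (K : Subgroup A) : ℤ :=
  ∏ p ∈ (Nat.card A).primeFactors, alphaP A p K

theorem alphaCW_eq_prod_localAlpha (A : Type*) [CommGroup A] (L : Subgroup A) :
    alphaCW A L = ∏ p : (Nat.card A).primeFactors,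
      localAlpha (primaryComponent A p) p (L.subgroupOf _) := by
  rw [alphaCW, ← Finset.prod_coe_sort]
  exact Finset.prod_congr rfl fun p _ => dif_pos (Nat.prime_of_mem_primeFactors p.2)

/-- Lemma (the `α`'s sum to `1`): if `K` is a cocyclic subgroup of the finite abelian
group `A` (i.e. `A/K` is cyclic), then `∑_{L ∈ Cocyc(A), L ≤ K} α_L = 1`. -/
theorem sum_alpha_eq_one {A : Type*} [CommGroup A] [Fintype A]
    (K : Subgroup A) (hK : IsCyclic (A ⧸ K)) :
    ∑ᶠ L ∈ {L : Subgroup A | IsCyclic (A ⧸ L) ∧ L ≤ K}, alphaCW A L = 1 := by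
  classical
  let e := CommGroup.subgroupOrderIsoPiPrimaryComponent A
  let t (p : (Nat.card A).primeFactors) : Finset (Subgroup (primaryComponent A p)) :=
    {M | IsCyclic (primaryComponent A p ⧸ M) ∧ M ≤ e K p}
  have hmem : ∀ L, L ∈ {L : Subgroup A | IsCyclic (A ⧸ L) ∧ L ≤ K}.toFinset ↔
      e L ∈ Fintype.piFinset t := fun L => by
    rw [Set.mem_toFinset, Fintype.mem_piFinset]
    simp only [t, Finset.mem_filter, Finset.mem_univ, true_and, forall_and]
    rw [← Pi.le_def, e.le_iff_le]
    exact and_congr (CommGroup.isCyclic_quotient_iff_primaryComponent L) Iff.rfl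
  rw [finsum_mem_eq_toFinset_sum]
  calc _ = ∑ g ∈ Fintype.piFinset t,
        ∏ p : (Nat.card A).primeFactors, localAlpha (primaryComponent A p) p (g p) :=
        Finset.sum_equiv e.toEquiv hmem fun L _ => alphaCW_eq_prod_localAlpha A L
    _ = ∏ p, ∑ M ∈ t p, localAlpha (primaryComponent A p) p M :=
        (Finset.prod_univ_sum t _).symm
    _ = 1 := Finset.prod_eq_one fun p _ =>
        have : IsCyclic (_ ⧸ e K p) :=
          (CommGroup.isCyclic_quotient_iff_primaryComponent K).mp hK p
        primaryComponent.isPGroup.sum_localAlpha_eq_one (K := e K p) _ fun M => by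
          simp [t]
end

section
/- For every positive real number x and every positive integer k: Σ_{X ⊆ {0,1,…,k−1}, |X| odd} ∏_{i ∈ {0,…,k−1}∖X} (x + 2i + 1) = k · ∏_{i=1}^{k−1} (x + 2i), where an empty product equals 1. -/
/-- Lemma (numerical identity): for every positive real `x` and positive integer `k`,
`∑_{X ⊆ {0,…,k-1}, |X| odd} ∏_{i ∈ {0,…,k-1} \ X} (x + 2i + 1) = k ∏_{i=1}^{k-1} (x + 2i)`. -/
theorem numerical_identity (x : ℝ) (hx : 0 < x) (k : ℕ) (hk : 0 < k) :
    ∑ X ∈ (Finset.range k).powerset.filter (fun X => Odd X.card),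
        ∏ i ∈ Finset.range k \ X, (x + 2 * i + 1)
      = k * ∏ i ∈ Finset.Icc 1 (k - 1), (x + 2 * i) := by
  obtain ⟨n, rfl⟩ : ∃ n, k = n + 1 := ⟨k - 1, (Nat.succ_pred_eq_of_pos hk).symm⟩
  set S := Finset.range (n + 1) with hS
  have h1 : ∏ i ∈ S, ((1 : ℝ) + (x + 2 * i + 1))
      = ∑ t ∈ S.powerset, (∏ i ∈ t, (1 : ℝ)) * ∏ i ∈ S \ t, (x + 2 * i + 1) :=
    Finset.prod_add _ _ _
  have h2 : ∏ i ∈ S, ((-1 : ℝ) + (x + 2 * i + 1))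
      = ∑ t ∈ S.powerset, (∏ i ∈ t, (-1 : ℝ)) * ∏ i ∈ S \ t, (x + 2 * i + 1) :=
    Finset.prod_add _ _ _
  simp only [Finset.prod_const] at h1 h2
  have hdiff : ∏ i ∈ S, ((1 : ℝ) + (x + 2 * i + 1)) - ∏ i ∈ S, ((-1 : ℝ) + (x + 2 * i + 1))
      = ∑ t ∈ S.powerset, ((1 : ℝ) ^ t.card - (-1 : ℝ) ^ t.card) * ∏ i ∈ S \ t, (x + 2 * i + 1) := by
    rw [h1, h2, ← Finset.sum_sub_distrib]
    exact Finset.sum_congr rfl fun t _ => by ring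
  have hsplit : ∑ t ∈ S.powerset, ((1 : ℝ) ^ t.card - (-1 : ℝ) ^ t.card) * ∏ i ∈ S \ t, (x + 2 * i + 1)
      = 2 * ∑ X ∈ S.powerset.filter (fun X => Odd X.card), ∏ i ∈ S \ X, (x + 2 * i + 1) := by
    rw [← Finset.sum_filter_add_sum_filter_not S.powerset (fun X => Odd X.card)]
    have hodd : ∀ t ∈ S.powerset.filter (fun X => Odd X.card),
        ((1 : ℝ) ^ t.card - (-1 : ℝ) ^ t.card) * ∏ i ∈ S \ t, (x + 2 * i + 1)
          = 2 * ∏ i ∈ S \ t, (x + 2 * i + 1) := by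
      intro t ht
      rw [Finset.mem_filter] at ht
      rw [ht.2.neg_one_pow, one_pow]
      ring
    have heven : ∀ t ∈ S.powerset.filter (fun X => ¬ Odd X.card),
        ((1 : ℝ) ^ t.card - (-1 : ℝ) ^ t.card) * ∏ i ∈ S \ t, (x + 2 * i + 1) = 0 := by
      intro t ht
      rw [Finset.mem_filter] at ht
      rw [(Nat.not_odd_iff_even.mp ht.2).neg_one_pow, one_pow]
      ring
    rw [Finset.sum_congr rfl hodd, Finset.sum_congr rfl heven, Finset.sum_const_zero, add_zero,
      Finset.mul_sum]
  -- compute the two products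
  have hIcc : ∏ i ∈ Finset.Icc 1 n, (x + 2 * (i : ℝ))
      = ∏ i ∈ Finset.range n, (x + 2 * ((i : ℝ) + 1)) := by
    rw [← Finset.Ico_add_one_right_eq_Icc, Finset.prod_Ico_eq_prod_range]
    exact Finset.prod_congr (by norm_num) fun i _ => by push_cast; ring
  have hA : ∏ i ∈ S, ((1 : ℝ) + (x + 2 * i + 1))
      = (∏ i ∈ Finset.Icc 1 n, (x + 2 * (i : ℝ))) * (x + 2 * ((n : ℝ) + 1)) := by
    rw [hIcc, hS, Finset.prod_range_succ]
    congr 1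
    · exact Finset.prod_congr rfl fun i _ => by ring
    · ring
  have hB : ∏ i ∈ S, ((-1 : ℝ) + (x + 2 * i + 1))
      = x * ∏ i ∈ Finset.Icc 1 n, (x + 2 * (i : ℝ)) := by
    rw [hIcc, hS, Finset.prod_range_succ', mul_comm]
    congr 1
    · push_cast; ring
    · exact Finset.prod_congr rfl fun i _ => by push_cast; ring
  have key := hdiff.trans hsplit
  rw [hA, hB] at key
  have : (2 : ℝ) * ∑ X ∈ S.powerset.filter (fun X => Odd X.card), ∏ i ∈ S \ X, (x + 2 * i + 1)
      = 2 * (((n : ℝ) + 1) * ∏ i ∈ Finset.Icc 1 n, (x + 2 * (i : ℝ))) := by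
    rw [← key]; ring
  have h2' := mul_left_cancel₀ (two_ne_zero) this
  simpa [hS, Nat.add_sub_cancel] using h2'
end
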